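/- arXiv:1903.11717 — 7 statements merged into one kernel-verified Lean document; each statement's English description precedes it below -/
import Mathlib

section
/- Let x > 1 and 0 < y < 1 be real numbers satisfying 2 - x < y < x/(2x - 1). Then y^2 - y(6x - 4x^2) + 4x - 3x^2 < 0. -/
/-- For real `x > 1` and `0 < y < 1` with `2 - x < y < x/(2x-1)`,
one has `y² - y(6x - 4x²) + 4x - 3x² < 0`. -/
theorem stmt0 (x y : ℝ) (hx : 1 < x) (hy0 : 0 < y) (hy1 : y < 1)
    (h1 : 2 - x < y) (h2 : y < x / (2 * x - 1)) :
    y ^ 2 - y * (6 * x - 4 * x ^ 2) + 4 * x - 3 * x ^ 2 < 0 := by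
  have hd : (0:ℝ) < 2 * x - 1 := by linarith
  have h2' : y * (2 * x - 1) < x := by
    calc y * (2 * x - 1) < x / (2 * x - 1) * (2 * x - 1) := by
          exact mul_lt_mul_of_pos_right h2 hd
      _ = x := div_mul_cancel₀ x hd.ne'
  nlinarith [sq_nonneg (y - 1), sq_nonneg (x - 1), mul_pos hy0 hd, sq_nonneg (x + y - 2), mul_pos (sub_pos.2 hx) hy0]
end

section
/- Let D, d, f, g be positive real numbers with D > d and f > g (here f = f'(0), g = g'(0)). Define c_a := (D f - d g)/\sqrt{(D-d)(f-g)}, c_f := 2\sqrt{d f}, and c_g := 2\sqrt{D g}. If D/d > 2 - g/f and d/D > 2 - f/g, then c_a > c_f and c_a > c_g. -/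
/-- For `D > d > 0`, `f > g > 0`, if `D/d > 2 - g/f` and `d/D > 2 - f/g`,
then the anomalous speed `c_a = (Df - dg)/√((D-d)(f-g))` satisfies `c_a > c_f = 2√(df)`
and `c_a > c_g = 2√(Dg)`. -/
theorem stmt1 (D d f g : ℝ) (hD : 0 < D) (hd : 0 < d) (hf : 0 < f) (hg : 0 < g)
    (hDd : D > d) (hfg : f > g)
    (h1 : D / d > 2 - g / f) (h2 : d / D > 2 - f / g) :
    (D * f - d * g) / Real.sqrt ((D - d) * (f - g)) > 2 * Real.sqrt (d * f) ∧
    (D * f - d * g) / Real.sqrt ((D - d) * (f - g)) > 2 * Real.sqrt (D * g) := by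
  have hS2 : (0:ℝ) < (D - d) * (f - g) :=
    mul_pos (sub_pos.mpr hDd) (sub_pos.mpr hfg)
  have hS : 0 < Real.sqrt ((D - d) * (f - g)) := Real.sqrt_pos.mpr hS2
  have hSsq : Real.sqrt ((D - d) * (f - g)) ^ 2 = (D - d) * (f - g) :=
    Real.sq_sqrt hS2.le
  have hA : 0 < D * f - d * g := by nlinarith
  -- clear denominators in h1, h2
  have h1' : D * f + d * g - 2 * (d * f) > 0 := by
    have h' : 2 * (d * f) < (D / d + g / f) * (d * f) :=
      mul_lt_mul_of_pos_right (by linarith [h1]) (mul_pos hd hf)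
    have e : (D / d + g / f) * (d * f) = D * f + d * g := by field_simp
    linarith [e ▸ h']
  have h2' : D * f + d * g - 2 * (D * g) > 0 := by
    have h' : 2 * (D * g) < (d / D + f / g) * (D * g) :=
      mul_lt_mul_of_pos_right (by linarith [h2]) (mul_pos hD hg)
    have e : (d / D + f / g) * (D * g) = d * g + D * f := by field_simp
    linarith [e ▸ h']
  constructor
  · rw [gt_iff_lt, lt_div_iff₀ hS]
    have hsq : (2 * Real.sqrt (d * f) * Real.sqrt ((D - d) * (f - g))) ^ 2
        < (D * f - d * g) ^ 2 := by
      have hdf : Real.sqrt (d * f) ^ 2 = d * f := Real.sq_sqrt (by positivity)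
      have key : 4 * (d * f) * ((D - d) * (f - g)) < (D * f - d * g) ^ 2 := by
        nlinarith [mul_pos h1' h1']
      calc (2 * Real.sqrt (d * f) * Real.sqrt ((D - d) * (f - g))) ^ 2
          = 4 * (d * f) * ((D - d) * (f - g)) := by rw [mul_pow, mul_pow, hdf, hSsq]; ring
        _ < (D * f - d * g) ^ 2 := key
    exact lt_of_pow_lt_pow_left₀ 2 hA.le hsq
  · rw [gt_iff_lt, lt_div_iff₀ hS]
    have hsq : (2 * Real.sqrt (D * g) * Real.sqrt ((D - d) * (f - g))) ^ 2
        < (D * f - d * g) ^ 2 := by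
      have hDg : Real.sqrt (D * g) ^ 2 = D * g := Real.sq_sqrt (by positivity)
      have key : 4 * (D * g) * ((D - d) * (f - g)) < (D * f - d * g) ^ 2 := by
        nlinarith [mul_pos h2' h2']
      calc (2 * Real.sqrt (D * g) * Real.sqrt ((D - d) * (f - g))) ^ 2
          = 4 * (D * g) * ((D - d) * (f - g)) := by rw [mul_pow, mul_pow, hDg, hSsq]; ring
        _ < (D * f - d * g) ^ 2 := key
    exact lt_of_pow_lt_pow_left₀ 2 hA.le hsq
end

section
/- Let D, d, g0, f0 > 0 with 2\sqrt{df0} < 2\sqrt{Dg0} =: c_g. Suppose c_g |1/(2D) - 1/(2d)| \leq \sqrt{c_g^2 - 4df0}/(2d). Then for every c \geq c_g there exists \alpha > 0 such that D\alpha^2 - c\alpha + g0 \leq 0 and d\alpha^2 - c\alpha + f0 \leq 0. -/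
set_option maxHeartbeats 1000000 in
/-- Let `D, d, g0, f0 > 0` with `2√(df0) < 2√(Dg0) =: c_g`, and suppose
`c_g |1/(2D) - 1/(2d)| ≤ √(c_g² - 4df0)/(2d)`. Then for every `c ≥ c_g` there is `α > 0`
with `Dα² - cα + g0 ≤ 0` and `dα² - cα + f0 ≤ 0`. -/
theorem stmt8 (D d g0 f0 : ℝ) (hD : 0 < D) (hd : 0 < d) (hg0 : 0 < g0) (hf0 : 0 < f0)
    (hlt : 2 * Real.sqrt (d * f0) < 2 * Real.sqrt (D * g0))
    (hcond : 2 * Real.sqrt (D * g0) * |1 / (2 * D) - 1 / (2 * d)| ≤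
      Real.sqrt ((2 * Real.sqrt (D * g0)) ^ 2 - 4 * d * f0) / (2 * d)) :
    ∀ c : ℝ, 2 * Real.sqrt (D * g0) ≤ c →
      ∃ α : ℝ, 0 < α ∧ D * α ^ 2 - c * α + g0 ≤ 0 ∧ d * α ^ 2 - c * α + f0 ≤ 0 := by
  intro c hc
  set s := Real.sqrt (D * g0) with hs_def
  have hs_pos : 0 < s := Real.sqrt_pos.2 (by positivity)
  have hs_sq : s ^ 2 = D * g0 := Real.sq_sqrt (by positivity)
  have hc_pos : 0 < c := lt_of_lt_of_le (by linarith) hc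
  -- discriminant of the d-parabola at c_g
  have hdisc_nonneg : 0 ≤ (2 * s) ^ 2 - 4 * d * f0 := by
    have h1 : Real.sqrt (d * f0) < s := by linarith
    have h2 : d * f0 < s ^ 2 := by
      have := Real.sq_sqrt (show (0:ℝ) ≤ d * f0 by positivity)
      nlinarith [Real.sqrt_nonneg (d * f0)]
    nlinarith
  set t := Real.sqrt ((2 * s) ^ 2 - 4 * d * f0) with ht_def
  have ht_sq : t ^ 2 = (2 * s) ^ 2 - 4 * d * f0 := Real.sq_sqrt hdisc_nonneg
  set e : ℝ := 1 / (2 * D) - 1 / (2 * d) with he_def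
  -- square the hypothesis hcond
  have hcond_sq : (2 * s) ^ 2 * e ^ 2 ≤ t ^ 2 / (2 * d) ^ 2 := by
    have h1 : (2 * s * |e|) ^ 2 ≤ (t / (2 * d)) ^ 2 := by
      apply pow_le_pow_left₀ (by positivity) hcond _
    have h2 : (2 * s * |e|) ^ 2 = (2 * s) ^ 2 * e ^ 2 := by
      rw [mul_pow, sq_abs]
    rw [h2] at h1
    calc (2 * s) ^ 2 * e ^ 2 ≤ (t / (2 * d)) ^ 2 := h1
      _ = t ^ 2 / (2 * d) ^ 2 := by rw [div_pow]
  -- key inequality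
  have hc_sq : 4 * s ^ 2 ≤ c ^ 2 := by nlinarith
  have hcond_sq' : (2 * s) ^ 2 * e ^ 2 * (2 * d) ^ 2 ≤ t ^ 2 := by
    rw [le_div_iff₀ (by positivity : (0:ℝ) < (2 * d) ^ 2)] at hcond_sq
    exact hcond_sq
  have key : 4 * d ^ 2 * c ^ 2 * e ^ 2 ≤ c ^ 2 - 4 * d * f0 := by
    have h3 : c ^ 2 * ((2 * s) ^ 2 * e ^ 2 * (2 * d) ^ 2) ≤ c ^ 2 * t ^ 2 :=
      mul_le_mul_of_nonneg_left hcond_sq' (sq_nonneg c)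
    have h2 : c ^ 2 * t ^ 2 ≤ 4 * s ^ 2 * (c ^ 2 - 4 * d * f0) := by
      nlinarith [mul_le_mul_of_nonneg_right hc_sq (show (0:ℝ) ≤ 4 * d * f0 by positivity)]
    have h4 : 4 * s ^ 2 * (4 * d ^ 2 * c ^ 2 * e ^ 2) ≤ 4 * s ^ 2 * (c ^ 2 - 4 * d * f0) := by
      nlinarith [h3, h2]
    exact le_of_mul_le_mul_left h4 (by positivity)
  refine ⟨c / (2 * D), by positivity, ?_, ?_⟩
  · have : D * (c / (2 * D)) ^ 2 - c * (c / (2 * D)) + g0 = g0 - c ^ 2 / (4 * D) := by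
      field_simp; ring
    rw [this]
    rw [sub_nonpos]
    rw [le_div_iff₀ (by positivity)]
    nlinarith
  · have expand : d * (c / (2 * D)) ^ 2 - c * (c / (2 * D)) + f0 =
        d * (c * e) ^ 2 - (c ^ 2 - 4 * d * f0) / (4 * d) := by
      rw [he_def]; field_simp; ring
    rw [expand, sub_nonpos, le_div_iff₀ (by positivity)]
    nlinarith [key]
end

section
/- Let g : [0,\infty) \to \mathbb{R} be locally Lipschitz with g(0) = g(1) = 0, g > 0 on (0,1), g < 0 on (1,\infty), and let D > 0. Let U : (-\infty, 0] \to (0,\infty) be a bounded C^2 solution of -D U'' = g(U) with U(-\infty) = 1, U'(-\infty) = 0, and 0 < U(0) < 1. Then 0 < U(y) < 1 for all y \leq 0 and U is strictly decreasing on (-\infty, 0]. -/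
/-!
With `G` a primitive of `g`, the energy `D/2 · U'² + G(U)` is conserved and, by the limits at
`-∞`, equals `G(1)`. On a bounded range of `U` the function `g` is Lipschitz and vanishes at `1`,
so `G(1) - G(s) ≤ K/2 · (s - 1)²` and the energy identity gives `|U'| ≤ C |U - 1|`. By Grönwall a
solution that reaches `1` stays there, which `U(0) < 1` forbids; hence `U < 1`. Then
`G(U) < G(1)` because `g > 0` on `(0, 1)`, so `U'` never vanishes; by Darboux it has constant
sign, and it cannot be positive since `U(0) < 1 = U(-∞)`.
-/

open Set Filter Topology

theorem eq_of_hasDerivAt_zero_of_tendsto_atBot {E : Type*} [NormedAddCommGroup E]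
    [NormedSpace ℝ E] {f : ℝ → E} {a : ℝ} {c : E} (hf : ∀ x ≤ a, HasDerivAt f 0 x)
    (hlim : Tendsto f atBot (𝓝 c)) : ∀ x ≤ a, f x = c := by
  intro x hx
  have hconst : ∀ y ≤ x, f y = f x := fun y hy =>
    (constant_of_has_deriv_right_zero
      (fun z hz => (hf z (hz.2.trans hx)).continuousAt.continuousWithinAt)
      (fun z hz => (hf z (hz.2.le.trans hx)).hasDerivWithinAt) x ⟨hy, le_rfl⟩).symm
  refine tendsto_nhds_unique (tendsto_const_nhds.congr' ?_) hlim
  filter_upwards [eventually_le_atBot x] with y hy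
  exact (hconst y hy).symm

theorem sub_le_mul_sq_of_abs_deriv_le {G g : ℝ → ℝ} {K c s : ℝ}
    (hG : ∀ x, HasDerivAt G (g x) x) (hg : ∀ x ∈ uIcc c s, |g x| ≤ K * |x - c|) :
    G c - G s ≤ K / 2 * (s - c) ^ 2 := by
  set φ : ℝ → ℝ := fun x => K / 2 * (x - c) ^ 2 + G x
  have hφ : ∀ x, HasDerivAt φ (K * (x - c) + g x) x := fun x =>
    ((((hasDerivAt_id x).sub_const c).pow 2).const_mul (K / 2) |>.add (hG x)).congr_deriv
      (by simp only [id, Nat.cast_ofNat]; ring)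
  have hφc : ContinuousOn φ univ := fun x _ => (hφ x).continuousAt.continuousWithinAt
  suffices φ c ≤ φ s by simp only [φ, sub_self] at this; nlinarith
  rcases le_total c s with hcs | hsc
  · refine monotoneOn_of_hasDerivWithinAt_nonneg (convex_Icc c s) (hφc.mono (subset_univ _))
      (fun x _ => (hφ x).hasDerivWithinAt) (fun x hx => ?_) (left_mem_Icc.2 hcs)
      (right_mem_Icc.2 hcs) hcs
    rw [interior_Icc] at hx
    have := hg x (Icc_subset_uIcc (Ioo_subset_Icc_self hx))
    rw [abs_of_pos (sub_pos.2 hx.1)] at this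
    linarith [neg_abs_le (g x)]
  · refine antitoneOn_of_hasDerivWithinAt_nonpos (convex_Icc s c) (hφc.mono (subset_univ _))
      (fun x _ => (hφ x).hasDerivWithinAt) (fun x hx => ?_) (left_mem_Icc.2 hsc)
      (right_mem_Icc.2 hsc) hsc
    rw [interior_Icc] at hx
    have := hg x (Icc_subset_uIcc' (Ioo_subset_Icc_self hx))
    rw [abs_of_neg (sub_neg.2 hx.2)] at this
    linarith [le_abs_self (g x)]

theorem eq_of_energy_eq {D : ℝ} (hD : 0 < D) {g G u u' : ℝ → ℝ} {a b c : ℝ}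
    (hglip : LocallyLipschitz g) (hgc : g c = 0) (hG : ∀ x, HasDerivAt G (g x) x)
    (hu : ∀ y ∈ Icc a b, HasDerivAt u (u' y) y)
    (henergy : ∀ y ∈ Icc a b, D / 2 * u' y ^ 2 + G (u y) = G c) (hab : a ≤ b) (ha : u a = c) :
    u b = c := by
  have hcont : ContinuousOn u (Icc a b) := fun y hy => (hu y hy).continuousAt.continuousWithinAt
  obtain ⟨R, hR⟩ := isCompact_Icc.exists_bound_of_continuousOn (hcont.sub continuousOn_const)
  obtain ⟨K, hK⟩ :=
    hglip.locallyLipschitzOn.exists_lipschitzOnWith_of_compact (isCompact_closedBall c R)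
  have hc : c ∈ Metric.closedBall c R :=
    Metric.mem_closedBall_self ((norm_nonneg _).trans (hR a ⟨le_rfl, hab⟩))
  have hslope : ∀ y ∈ Icc a b, |u' y| ≤ √(K / D) * |u y - c| := by
    intro y hy
    have hpot : G c - G (u y) ≤ K / 2 * (u y - c) ^ 2 := by
      refine sub_le_mul_sq_of_abs_deriv_le hG fun x hx => ?_
      have hxc : |x - c| ≤ R := (abs_sub_left_of_mem_uIcc hx).trans (hR y hy)
      simpa [hgc, Real.dist_eq] using hK.dist_le_mul x (by simpa [Real.dist_eq] using hxc) c hc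
    have hsq : u' y ^ 2 ≤ K / D * (u y - c) ^ 2 := by
      rw [div_mul_eq_mul_div, le_div_iff₀ hD]
      nlinarith [henergy y hy]
    calc |u' y| ≤ √(K / D * (u y - c) ^ 2) := Real.abs_le_sqrt hsq
      _ = √(K / D) * |u y - c| := by
        rw [Real.sqrt_mul (div_nonneg K.coe_nonneg hD.le), Real.sqrt_sq_eq_abs]
  have hzero := eq_zero_of_abs_deriv_le_mul_abs_self_of_eq_zero_right (f := fun y => u y - c)
    (hcont.sub continuousOn_const)
    (fun y hy => ((hu y (Ico_subset_Icc_self hy)).sub_const c).hasDerivWithinAt)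
    (sub_eq_zero.2 ha) (fun y hy => hslope y (Ico_subset_Icc_self hy)) b ⟨hab, le_rfl⟩
  exact sub_eq_zero.1 hzero

theorem energy_eq_of_tendsto_atBot {D ℓ : ℝ} {g G U U' U'' : ℝ → ℝ}
    (hG : ∀ s, HasDerivAt G (g s) s) (hU : ∀ y ≤ 0, HasDerivAt U (U' y) y)
    (hU' : ∀ y ≤ 0, HasDerivAt U' (U'' y) y) (heq : ∀ y ≤ 0, -D * U'' y = g (U y))
    (hlim : Tendsto U atBot (𝓝 ℓ)) (hlim' : Tendsto U' atBot (𝓝 0)) :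
    ∀ y ≤ 0, D / 2 * U' y ^ 2 + G (U y) = G ℓ := by
  refine eq_of_hasDerivAt_zero_of_tendsto_atBot (fun y hy => ?_) ?_
  · refine ((((hU' y hy).pow 2).const_mul (D / 2)).add
      ((hG (U y)).comp y (hU y hy))).congr_deriv ?_
    rw [← heq y hy]
    ring
  · have hcont : Continuous G := continuous_iff_continuousAt.2 fun s => (hG s).continuousAt
    simpa using (tendsto_const_nhds.mul (hlim'.pow 2)).add (hcont.tendsto ℓ |>.comp hlim)

theorem deriv_neg_of_ne_zero_of_tendsto_atBot {u u' : ℝ → ℝ} {ℓ : ℝ}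
    (hu : ∀ y ≤ 0, HasDerivAt u (u' y) y) (hne : ∀ y ≤ 0, u' y ≠ 0)
    (hlim : Tendsto u atBot (𝓝 ℓ)) (h0 : u 0 < ℓ) : ∀ y ≤ 0, u' y < 0 := by
  refine (hasDerivWithinAt_forall_lt_or_forall_gt_of_forall_ne (convex_Iic 0)
    (fun y hy => (hu y hy).hasDerivWithinAt) hne).resolve_right fun hpos => h0.not_ge ?_
  have hmono : MonotoneOn u (Iic 0) :=
    monotoneOn_of_hasDerivWithinAt_nonneg (convex_Iic 0)
      (fun y hy => (hu y hy).continuousAt.continuousWithinAt)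
      (fun y hy => (hu y (interior_subset (s := Iic 0) hy)).hasDerivWithinAt)
      (fun y hy => (hpos y (interior_subset (s := Iic 0) hy)).le)
  refine le_of_tendsto hlim ?_
  filter_upwards [eventually_le_atBot 0] with y hy
  exact hmono hy self_mem_Iic hy

theorem stmt11_general (D : ℝ) (hD : 0 < D) (g : ℝ → ℝ)
    (hglip : LocallyLipschitz g)
    (hg1 : g 1 = 0)
    (hgpos : ∀ s ∈ Set.Ioo (0 : ℝ) 1, 0 < g s)
    (U U' U'' : ℝ → ℝ)
    (hU : ∀ y : ℝ, y ≤ 0 → HasDerivAt U (U' y) y)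
    (hU' : ∀ y : ℝ, y ≤ 0 → HasDerivAt U' (U'' y) y)
    (heq : ∀ y : ℝ, y ≤ 0 → -D * U'' y = g (U y))
    (hpos : ∀ y : ℝ, y ≤ 0 → 0 < U y)
    (hlim : Filter.Tendsto U Filter.atBot (nhds 1))
    (hlim' : Filter.Tendsto U' Filter.atBot (nhds 0))
    (hU0 : U 0 < 1) :
    (∀ y : ℝ, y ≤ 0 → 0 < U y ∧ U y < 1) ∧ StrictAntiOn U (Set.Iic 0) := by
  set G : ℝ → ℝ := fun s => ∫ t in (1 : ℝ)..s, g t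
  have hG : ∀ s, HasDerivAt G (g s) s := fun s =>
    (hglip.continuous.integral_hasStrictDerivAt 1 s).hasDerivAt
  have henergy := energy_eq_of_tendsto_atBot hG hU hU' heq hlim hlim'
  have hlt : ∀ y ≤ 0, U y < 1 := by
    intro y hy
    by_contra! hge
    obtain ⟨z, hz, hUz⟩ := intermediate_value_Icc' hy
      (fun x hx => (hU x hx.2).continuousAt.continuousWithinAt) ⟨hU0.le, hge⟩
    exact hU0.ne (eq_of_energy_eq hD hglip hg1 hG (fun x hx => hU x hx.2)
      (fun x hx => henergy x hx.2) hz.2 hUz)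
  have hG_lt : ∀ y ≤ 0, G (U y) < G 1 := fun y hy => by
    obtain ⟨ξ, hξ, hslope⟩ := exists_hasDerivAt_eq_slope G g (hlt y hy)
      (fun x _ => (hG x).continuousAt.continuousWithinAt) (fun x _ => hG x)
    have hgξ := hgpos ξ ⟨(hpos y hy).trans hξ.1, hξ.2⟩
    rw [hslope] at hgξ
    exact sub_pos.1 ((div_pos_iff_of_pos_right (sub_pos.2 (hlt y hy))).1 hgξ)
  have hU'_ne : ∀ y ≤ 0, U' y ≠ 0 := fun y hy hzero => by
    linarith [hzero ▸ henergy y hy, hG_lt y hy]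
  have hU'_neg := deriv_neg_of_ne_zero_of_tendsto_atBot hU hU'_ne hlim hU0
  refine ⟨fun y hy => ⟨hpos y hy, hlt y hy⟩, ?_⟩
  exact strictAntiOn_of_hasDerivWithinAt_neg (convex_Iic 0)
    (fun y hy => (hU y hy).continuousAt.continuousWithinAt)
    (fun y hy => (hU y (interior_subset (s := Iic 0) hy)).hasDerivWithinAt)
    (fun y hy => hU'_neg y (interior_subset (s := Iic 0) hy))

/-- Let `g` be locally Lipschitz of Fisher-KPP type and `U` a bounded
positive solution of `-DU'' = g(U)` on `(-∞,0]` with `U(-∞) = 1`, `U'(-∞) = 0` and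
`0 < U(0) < 1`. Then `0 < U < 1` on `(-∞,0]` and `U` is strictly decreasing there. -/
theorem stmt11 (D : ℝ) (hD : 0 < D) (g : ℝ → ℝ)
    (hglip : LocallyLipschitz g)
    (hg0 : g 0 = 0) (hg1 : g 1 = 0)
    (hgpos : ∀ s ∈ Set.Ioo (0 : ℝ) 1, 0 < g s) (hgneg : ∀ s : ℝ, 1 < s → g s < 0)
    (U U' U'' : ℝ → ℝ)
    (hU : ∀ y : ℝ, y ≤ 0 → HasDerivAt U (U' y) y)
    (hU' : ∀ y : ℝ, y ≤ 0 → HasDerivAt U' (U'' y) y)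
    (heq : ∀ y : ℝ, y ≤ 0 → -D * U'' y = g (U y))
    (hpos : ∀ y : ℝ, y ≤ 0 → 0 < U y)
    (hbdd : ∃ M : ℝ, ∀ y : ℝ, y ≤ 0 → U y ≤ M)
    (hlim : Filter.Tendsto U Filter.atBot (nhds 1))
    (hlim' : Filter.Tendsto U' Filter.atBot (nhds 0))
    (hU0 : U 0 < 1) :
    (∀ y : ℝ, y ≤ 0 → 0 < U y ∧ U y < 1) ∧ StrictAntiOn U (Set.Iic 0) :=
  stmt11_general D hD g hglip hg1 hgpos U U' U'' hU hU' heq hpos hlim hlim' hU0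
end

section
/- For every \varepsilon > 0, \alpha \geq -\varepsilon, and \tau > -1, the function r \mapsto r^{\alpha} J_{\tau+\varepsilon}(r)/J_{\tau}(r) is increasing on (0, j_{\tau}), where J_{\tau} is the Bessel function of the first kind of order \tau and j_{\tau} is its first positive zero. -/
/-!
Writing `u_σ(r) = r^{-σ} J_σ(r)`, the function in question is `r^{α+ε} · u_{τ+ε}(r) / u_τ(r)`.
The first factor is positive and nondecreasing because `α + ε ≥ 0`. By the recurrence
`u_σ' = -r^{-σ} J_{σ+1}`, the Wronskian `u_{τ+ε}' u_τ - u_{τ+ε} u_τ'` equals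
`r^{-2τ-ε} (J_{τ+ε} J_{τ+1} - J_{τ+ε+1} J_τ)`, which is positive exactly because
`J_{σ+1}/J_σ` decreases in `σ`; so the quotient `u_{τ+ε}/u_τ` is strictly increasing.
-/

open Set

theorem MonotoneOn.mul_strictMonoOn_of_pos {α β : Type*} [Preorder α] [MulZeroClass β]
    [Preorder β] [MulPosMono β] [PosMulStrictMono β] {f g : α → β} {s : Set α}
    (hf : MonotoneOn f s) (hg : StrictMonoOn g s) (hf0 : ∀ x ∈ s, 0 < f x)
    (hg0 : ∀ x ∈ s, 0 ≤ g x) : StrictMonoOn (fun x => f x * g x) s := by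
  intro x hx y hy hxy
  calc f x * g x ≤ f y * g x := mul_le_mul_of_nonneg_right (hf hx hy hxy.le) (hg0 x hx)
    _ < f y * g y := mul_lt_mul_of_pos_left (hg hx hy hxy) (hf0 y hy)

theorem strictMonoOn_div_of_hasDerivAt {D : Set ℝ} (hD : Convex ℝ D) {u v u' v' : ℝ → ℝ}
    (hu : ∀ x ∈ D, HasDerivAt u (u' x) x) (hv : ∀ x ∈ D, HasDerivAt v (v' x) x)
    (hv0 : ∀ x ∈ D, 0 < v x) (hw : ∀ x ∈ D, u x * v' x < u' x * v x) :
    StrictMonoOn (fun x => u x / v x) D := by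
  have hderiv : ∀ x ∈ D, HasDerivAt (fun x => u x / v x)
      ((u' x * v x - u x * v' x) / v x ^ 2) x :=
    fun x hx => (hu x hx).div (hv x hx) (hv0 x hx).ne'
  refine strictMonoOn_of_hasDerivWithinAt_pos hD
    (fun x hx => (hderiv x hx).continuousAt.continuousWithinAt)
    (fun x hx => (hderiv x (interior_subset hx)).hasDerivWithinAt)
    (fun x hx => ?_)
  have hx := interior_subset hx
  exact div_pos (sub_pos.2 (hw x hx)) (pow_pos (hv0 x hx) 2)

section Bessel

variable {J : ℝ → ℝ → ℝ} {j : ℝ → ℝ}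

theorem pos_of_order_le
    (hjmono : ∀ τ₁ τ₂ : ℝ, -1 < τ₁ → τ₁ ≤ τ₂ → j τ₁ ≤ j τ₂)
    (hJpos : ∀ τ : ℝ, -1 < τ → ∀ r ∈ Set.Ioo 0 (j τ), 0 < J τ r)
    {τ σ r : ℝ} (hτ : -1 < τ) (hτσ : τ ≤ σ) (hr : r ∈ Ioo 0 (j τ)) : 0 < J σ r :=
  hJpos σ (hτ.trans_le hτσ) r ⟨hr.1, hr.2.trans_le (hjmono τ σ hτ hτσ)⟩

theorem strictMonoOn_rpow_neg_mul_div_rpow_neg_mul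
    (hjmono : ∀ τ₁ τ₂ : ℝ, -1 < τ₁ → τ₁ ≤ τ₂ → j τ₁ ≤ j τ₂)
    (hJpos : ∀ τ : ℝ, -1 < τ → ∀ r ∈ Set.Ioo 0 (j τ), 0 < J τ r)
    (hrec : ∀ τ : ℝ, -1 < τ → ∀ r : ℝ, 0 < r →
      HasDerivAt (fun s : ℝ => s ^ (-τ) * J τ s) (-(r ^ (-τ) * J (τ + 1) r)) r)
    (hquot : ∀ τ₁ τ₂ : ℝ, -1 < τ₁ → τ₁ < τ₂ → ∀ r ∈ Set.Ioo 0 (j τ₁),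
      J (τ₂ + 1) r / J τ₂ r < J (τ₁ + 1) r / J τ₁ r)
    {τ ε : ℝ} (hτ : -1 < τ) (hε : 0 < ε) :
    StrictMonoOn (fun r => r ^ (-(τ + ε)) * J (τ + ε) r / (r ^ (-τ) * J τ r))
      (Ioo 0 (j τ)) := by
  refine strictMonoOn_div_of_hasDerivAt (convex_Ioo _ _)
    (fun r hr => hrec (τ + ε) (by linarith) r hr.1) (fun r hr => hrec τ hτ r hr.1)
    (fun r hr => mul_pos (Real.rpow_pos_of_pos hr.1 _) (hJpos τ hτ r hr)) (fun r hr => ?_)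
  have hJτ := hJpos τ hτ r hr
  have hJτε := pos_of_order_le hjmono hJpos hτ (le_add_of_nonneg_right hε.le) hr
  have hcross : J (τ + ε + 1) r * J τ r < J (τ + 1) r * J (τ + ε) r :=
    (div_lt_div_iff₀ hJτε hJτ).1 (hquot τ (τ + ε) hτ (by linarith) r hr)
  have hscale := mul_pos (Real.rpow_pos_of_pos hr.1 (-(τ + ε))) (Real.rpow_pos_of_pos hr.1 (-τ))
  linear_combination mul_lt_mul_of_pos_left hcross hscale

end Bessel

theorem stmt13_general (J : ℝ → ℝ → ℝ) (j : ℝ → ℝ)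
    (hjmono : ∀ τ₁ τ₂ : ℝ, -1 < τ₁ → τ₁ ≤ τ₂ → j τ₁ ≤ j τ₂)
    (hJpos : ∀ τ : ℝ, -1 < τ → ∀ r ∈ Set.Ioo 0 (j τ), 0 < J τ r)
    (hrec : ∀ τ : ℝ, -1 < τ → ∀ r : ℝ, 0 < r →
      HasDerivAt (fun s : ℝ => s ^ (-τ) * J τ s) (-(r ^ (-τ) * J (τ + 1) r)) r)
    (hquot : ∀ τ₁ τ₂ : ℝ, -1 < τ₁ → τ₁ < τ₂ → ∀ r ∈ Set.Ioo 0 (j τ₁),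
      J (τ₂ + 1) r / J τ₂ r < J (τ₁ + 1) r / J τ₁ r) :
    ∀ ε : ℝ, 0 < ε → ∀ α : ℝ, -ε ≤ α → ∀ τ : ℝ, -1 < τ →
      StrictMonoOn (fun r : ℝ => r ^ α * J (τ + ε) r / J τ r) (Set.Ioo 0 (j τ)) := by
  intro ε hε α hα τ hτ
  have hpow : MonotoneOn (fun r : ℝ => r ^ (α + ε)) (Ioo 0 (j τ)) :=
    (Real.monotoneOn_rpow_Ici_of_exponent_nonneg (by linarith)).mono
      fun r hr => mem_Ici.2 hr.1.le
  have hratio_nonneg : ∀ r ∈ Ioo 0 (j τ),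
      0 ≤ r ^ (-(τ + ε)) * J (τ + ε) r / (r ^ (-τ) * J τ r) := fun r hr => by
    have hJτε := pos_of_order_le hjmono hJpos hτ (le_add_of_nonneg_right hε.le) hr
    have hJτ := hJpos τ hτ r hr
    have hr0 := hr.1
    positivity
  refine (hpow.mul_strictMonoOn_of_pos
    (strictMonoOn_rpow_neg_mul_div_rpow_neg_mul hjmono hJpos hrec hquot hτ hε)
    (fun r hr => Real.rpow_pos_of_pos hr.1 _) hratio_nonneg).congr fun r hr => ?_
  have hexp : r ^ (α + ε) * r ^ (-(τ + ε)) / r ^ (-τ) = r ^ α := by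
    rw [← Real.rpow_add hr.1, ← Real.rpow_sub hr.1]
    ring_nf
  simp only
  rw [← hexp]
  ring

/-- Lemma A.1: For every `ε > 0`, `α ≥ -ε`, `τ > -1`, the function
`r ↦ r^α J_{τ+ε}(r)/J_τ(r)` is increasing on `(0, j_τ)`. Here `J` is the Bessel function
of the first kind (axiomatized via its first positive zero `j`, its positivity before the
first zero, the recurrence `(r^{-τ}J_τ)' = -r^{-τ}J_{τ+1}`, and the strict decrease in the
order `τ` of the quotient `J_{τ+1}/J_τ` on `(0, j_τ)`). -/
theorem stmt13 (J : ℝ → ℝ → ℝ) (j : ℝ → ℝ)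
    (hjpos : ∀ τ : ℝ, -1 < τ → 0 < j τ)
    (hjmono : ∀ τ₁ τ₂ : ℝ, -1 < τ₁ → τ₁ ≤ τ₂ → j τ₁ ≤ j τ₂)
    (hJpos : ∀ τ : ℝ, -1 < τ → ∀ r ∈ Set.Ioo 0 (j τ), 0 < J τ r)
    (hJzero : ∀ τ : ℝ, -1 < τ → J τ (j τ) = 0)
    (hrec : ∀ τ : ℝ, -1 < τ → ∀ r : ℝ, 0 < r →
      HasDerivAt (fun s : ℝ => s ^ (-τ) * J τ s) (-(r ^ (-τ) * J (τ + 1) r)) r)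
    (hquot : ∀ τ₁ τ₂ : ℝ, -1 < τ₁ → τ₁ < τ₂ → ∀ r ∈ Set.Ioo 0 (j τ₁),
      J (τ₂ + 1) r / J τ₂ r < J (τ₁ + 1) r / J τ₁ r) :
    ∀ ε : ℝ, 0 < ε → ∀ α : ℝ, -ε ≤ α → ∀ τ : ℝ, -1 < τ →
      StrictMonoOn (fun r : ℝ => r ^ α * J (τ + ε) r / J τ r) (Set.Ioo 0 (j τ)) :=
  stmt13_general J j hjmono hJpos hrec hquot
end

section
/- For \tau > -1 and r \in (0, j_{\tau}), with h_u(r) := r J_{\tau+1}(r)/J_{\tau}(r), one has r h_u'(r)/h_u(r) = 2 + r (J_{\tau+1}(r)/J_{\tau}(r) - J_{\tau+2}(r)/J_{\tau+1}(r)) > 2. Consequently, if k_u denotes the inverse function of h_u, then 2 s k_u'(s) < k_u(s) for all s in the range of h_u, and the map D \mapsto D \cdot (k_u(\mu R / D)/R)^2 is increasing in D > 0 for any fixed \mu, R > 0. -/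
/-!
The recurrence `(s^{-σ} J_σ)' = -s^{-σ} J_{σ+1}` gives `J_σ' = (σ/r) J_σ - J_{σ+1}`, so the
quotient rule yields `h_u' = (J_{τ+1}/J_τ) (2 + r (J_{τ+1}/J_τ - J_{τ+2}/J_{τ+1}))`, where the
bracket exceeds `2` by the monotonicity of Bessel quotients in the order. Hence `r h_u' > 2 h_u > 0`,
and inverting, `2 s k_u'(s) < k_u(s)`: the function `s ↦ k_u(s)² / s` decreases. Since
`D (k_u(μR/D)/R)² = (μ/R) k_u(s)² / s` with `s = μR/D`, the monotonicity in `D` follows.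
-/

open Set Filter Topology

theorem hasDerivAt_of_hasDerivAt_rpow_neg_mul {f g : ℝ → ℝ} {σ r : ℝ} (hr : 0 < r)
    (hf : HasDerivAt (fun s => s ^ (-σ) * f s) (-(r ^ (-σ) * g r)) r) :
    HasDerivAt f (σ / r * f r - g r) r := by
  have heq : (fun s => s ^ σ * (s ^ (-σ) * f s)) =ᶠ[𝓝 r] f := by
    filter_upwards [eventually_gt_nhds hr] with s hs
    rw [← mul_assoc, ← Real.rpow_add hs, add_neg_cancel, Real.rpow_zero, one_mul]
  refine (((Real.hasDerivAt_rpow_const (Or.inl hr.ne')).mul hf).congr_of_eventuallyEq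
    heq.symm).congr_deriv ?_
  rw [Real.rpow_sub_one hr.ne', Real.rpow_neg hr.le]
  have : r ^ σ ≠ 0 := (Real.rpow_pos_of_pos hr σ).ne'
  field_simp
  ring

theorem hasDerivAt_mul_div_of_recurrence {f₀ f₁ f₂ : ℝ → ℝ} {τ r : ℝ} (hr : r ≠ 0)
    (h₀ : f₀ r ≠ 0) (h₁ : f₁ r ≠ 0) (hf₀ : HasDerivAt f₀ (τ / r * f₀ r - f₁ r) r)
    (hf₁ : HasDerivAt f₁ ((τ + 1) / r * f₁ r - f₂ r) r) :
    HasDerivAt (fun s => s * f₁ s / f₀ s)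
      (f₁ r / f₀ r * (2 + r * (f₁ r / f₀ r - f₂ r / f₁ r))) r := by
  refine (((hasDerivAt_id' r).mul hf₁).fun_div hf₀ h₀).congr_deriv ?_
  simp only [Pi.mul_apply]
  field_simp
  ring

theorem StrictMonoOn.hasDerivAt_rightInverse {h k : ℝ → ℝ} {I S : Set ℝ} {s h' : ℝ}
    (hh : StrictMonoOn h I) (hI : IsOpen I) (hS : IsOpen S) (hk : MapsTo k S I)
    (hhk : ∀ t ∈ S, h (k t) = t) (hs : s ∈ S) (hd : HasDerivAt h h' (k s)) (hh' : h' ≠ 0) :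
    HasDerivAt k h'⁻¹ s := by
  have hk_mono : StrictMonoOn k S := fun a ha b hb hab =>
    (hh.lt_iff_lt (hk ha) (hk hb)).1 (by rwa [hhk a ha, hhk b hb])
  have hk_image : k '' S ∈ 𝓝 (k s) := by
    have hpre : h ⁻¹' S ∈ 𝓝 (k s) :=
      hd.continuousAt.preimage_mem_nhds (by rw [hhk s hs]; exact hS.mem_nhds hs)
    refine mem_of_superset (inter_mem (hI.mem_nhds (hk hs)) hpre) ?_
    rintro r ⟨hr, hrS⟩
    exact ⟨h r, hrS, hh.injOn (hk hrS) hr (hhk _ hrS)⟩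
  exact hd.of_local_left_inverse
    (hk_mono.continuousAt_of_image_mem_nhds (hS.mem_nhds hs) hk_image) hh'
    (eventually_of_mem (hS.mem_nhds hs) hhk)

theorem hasDerivAt_rightInverse_of_deriv_pos {h k h' : ℝ → ℝ} {I S : Set ℝ} {s : ℝ}
    (hI : IsOpen I) (hIc : Convex ℝ I) (hS : IsOpen S) (hk : MapsTo k S I)
    (hhk : ∀ t ∈ S, h (k t) = t) (hd : ∀ r ∈ I, HasDerivAt h (h' r) r)
    (hpos : ∀ r ∈ I, 0 < h' r) (hs : s ∈ S) :
    HasDerivAt k (h' (k s))⁻¹ s := by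
  have hh : StrictMonoOn h I :=
    strictMonoOn_of_hasDerivWithinAt_pos hIc (fun r hr => (hd r hr).continuousAt.continuousWithinAt)
      (fun r hr => (hd r (interior_subset hr)).hasDerivWithinAt)
      (fun r hr => hpos r (interior_subset hr))
  exact hh.hasDerivAt_rightInverse hI hS hk hhk hs (hd _ (hk hs)) (hpos _ (hk hs)).ne'

theorem strictAntiOn_sq_div {k k' : ℝ → ℝ} (hk : ∀ s > 0, HasDerivAt k (k' s) s)
    (hpos : ∀ s > 0, 0 < k s) (hel : ∀ s > 0, 2 * s * k' s < k s) :
    StrictAntiOn (fun s => k s ^ 2 / s) (Ioi 0) := by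
  have hd : ∀ s > 0, HasDerivAt (fun s => k s ^ 2 / s) (k s * (2 * s * k' s - k s) / s ^ 2) s :=
    fun s hs => (((hk s hs).pow 2).fun_div (hasDerivAt_id' s) hs.ne').congr_deriv (by
      simp only [Pi.pow_apply]
      ring)
  refine strictAntiOn_of_deriv_neg (convex_Ioi 0)
    (fun s hs => (hd s hs).continuousAt.continuousWithinAt) fun s hs => ?_
  replace hs : 0 < s := by rwa [interior_Ioi] at hs
  rw [(hd s hs).deriv]
  exact div_neg_of_neg_of_pos
    (mul_neg_of_pos_of_neg (hpos s hs) (by linarith [hel s hs])) (by positivity)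

theorem strictMonoOn_mul_sq_div_comp_div {k k' : ℝ → ℝ} {c R : ℝ} (hc : 0 < c) (hR : R ≠ 0)
    (hk : ∀ s > 0, HasDerivAt k (k' s) s) (hpos : ∀ s > 0, 0 < k s)
    (hel : ∀ s > 0, 2 * s * k' s < k s) :
    StrictMonoOn (fun D => D * (k (c / D) / R) ^ 2) (Ioi 0) := by
  intro a (ha : 0 < a) b (hb : 0 < b) hab
  have hanti := strictAntiOn_sq_div hk hpos hel (div_pos hc hb) (div_pos hc ha)
    (div_lt_div_of_pos_left hc ha hab)
  have hscale : ∀ D > 0, D * (k (c / D) / R) ^ 2 = c / R ^ 2 * (k (c / D) ^ 2 / (c / D)) :=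
    fun D hD => by field_simp
  simp only [hscale a ha, hscale b hb]
  exact mul_lt_mul_of_pos_left hanti (by positivity)

theorem stmt15_general (J : ℝ → ℝ → ℝ) (j : ℝ → ℝ) (τ : ℝ) (hτ : -1 < τ)
    (μ R : ℝ) (hμ : 0 < μ) (hR : 0 < R)
    (hJpos : ∀ σ : ℝ, τ ≤ σ → ∀ r ∈ Set.Ioo 0 (j τ), 0 < J σ r)
    (hrec : ∀ σ : ℝ, -1 < σ → ∀ r : ℝ, 0 < r →
      HasDerivAt (fun s : ℝ => s ^ (-σ) * J σ s) (-(r ^ (-σ) * J (σ + 1) r)) r)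
    (hquot : ∀ r ∈ Set.Ioo 0 (j τ),
      J (τ + 2) r / J (τ + 1) r < J (τ + 1) r / J τ r)
    (k : ℝ → ℝ)
    (hkright : ∀ s : ℝ, 0 < s →
      k s ∈ Set.Ioo 0 (j τ) ∧ k s * J (τ + 1) (k s) / J τ (k s) = s) :
    (∀ r ∈ Set.Ioo 0 (j τ),
      r * deriv (fun s : ℝ => s * J (τ + 1) s / J τ s) r / (r * J (τ + 1) r / J τ r)
          = 2 + r * (J (τ + 1) r / J τ r - J (τ + 2) r / J (τ + 1) r) ∧
      2 < r * deriv (fun s : ℝ => s * J (τ + 1) s / J τ s) r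
            / (r * J (τ + 1) r / J τ r)) ∧
    (∀ s : ℝ, 0 < s → 2 * s * deriv k s < k s) ∧
    StrictMonoOn (fun D : ℝ => D * (k (μ * R / D) / R) ^ 2) (Set.Ioi 0) := by
  set h := fun s : ℝ => s * J (τ + 1) s / J τ s
  set q := fun r => 2 + r * (J (τ + 1) r / J τ r - J (τ + 2) r / J (τ + 1) r)
  have hJ₀ : ∀ r ∈ Ioo 0 (j τ), 0 < J τ r := hJpos τ le_rfl
  have hJ₁ : ∀ r ∈ Ioo 0 (j τ), 0 < J (τ + 1) r := hJpos (τ + 1) (by linarith)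
  have hq : ∀ r ∈ Ioo 0 (j τ), 2 < q r := fun r hr => by
    linarith [mul_pos hr.1 (sub_pos.2 (hquot r hr))]
  have hh' : ∀ r ∈ Ioo 0 (j τ), HasDerivAt h (J (τ + 1) r / J τ r * q r) r := fun r hr =>
    hasDerivAt_mul_div_of_recurrence hr.1.ne' (hJ₀ r hr).ne' (hJ₁ r hr).ne'
      (hasDerivAt_of_hasDerivAt_rpow_neg_mul hr.1 (hrec τ hτ r hr.1))
      (by simpa only [add_assoc, one_add_one_eq_two] using
        hasDerivAt_of_hasDerivAt_rpow_neg_mul hr.1 (hrec (τ + 1) (by linarith) r hr.1))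
  have hh'_pos : ∀ r ∈ Ioo 0 (j τ), 0 < J (τ + 1) r / J τ r * q r := fun r hr =>
    mul_pos (div_pos (hJ₁ r hr) (hJ₀ r hr)) (by linarith [hq r hr])
  have hh'_eq : ∀ r, r * (J (τ + 1) r / J τ r * q r) = h r * q r := fun r => by
    simp only [h]
    ring
  have hk' : ∀ s > 0, HasDerivAt k (J (τ + 1) (k s) / J τ (k s) * q (k s))⁻¹ s := fun s hs =>
    hasDerivAt_rightInverse_of_deriv_pos isOpen_Ioo (convex_Ioo 0 (j τ)) isOpen_Ioi
      (fun t ht => (hkright t ht).1) (fun t ht => (hkright t ht).2) hh' hh'_pos hs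
  have hel : ∀ s > 0, 2 * s * (J (τ + 1) (k s) / J τ (k s) * q (k s))⁻¹ < k s := fun s hs => by
    obtain ⟨hr, hhr⟩ := hkright s hs
    rw [← div_eq_mul_inv, div_lt_iff₀ (hh'_pos _ hr), hh'_eq, show h (k s) = s from hhr]
    linarith [mul_lt_mul_of_pos_left (hq _ hr) hs]
  refine ⟨fun r hr => ?_, fun s hs => (hk' s hs).deriv ▸ hel s hs,
    strictMonoOn_mul_sq_div_comp_div (mul_pos hμ hR) hR.ne' hk' (fun s hs => (hkright s hs).1.1)
      hel⟩
  have hh_ne : h r ≠ 0 := (div_pos (mul_pos hr.1 (hJ₁ r hr)) (hJ₀ r hr)).ne'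
  rw [(hh' r hr).deriv, hh'_eq, mul_div_cancel_left₀ _ hh_ne]
  exact ⟨rfl, hq r hr⟩

/-- For `τ > -1` and `r ∈ (0, j_τ)`, with `h_u(r) = r J_{τ+1}(r)/J_τ(r)`,
one has `r h_u'(r)/h_u(r) = 2 + r(J_{τ+1}/J_τ - J_{τ+2}/J_{τ+1}) > 2`. Consequently the
inverse `k_u` of `h_u` satisfies `2s k_u'(s) < k_u(s)` for all `s > 0` (the range of
`h_u`), and `D ↦ D (k_u(μR/D)/R)²` is increasing on `(0,∞)` for fixed `μ, R > 0`. -/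
theorem stmt15 (J : ℝ → ℝ → ℝ) (j : ℝ → ℝ) (τ : ℝ) (hτ : -1 < τ)
    (μ R : ℝ) (hμ : 0 < μ) (hR : 0 < R)
    (hjpos : 0 < j τ)
    (hJpos : ∀ σ : ℝ, τ ≤ σ → ∀ r ∈ Set.Ioo 0 (j τ), 0 < J σ r)
    (hrec : ∀ σ : ℝ, -1 < σ → ∀ r : ℝ, 0 < r →
      HasDerivAt (fun s : ℝ => s ^ (-σ) * J σ s) (-(r ^ (-σ) * J (σ + 1) r)) r)
    (hquot : ∀ r ∈ Set.Ioo 0 (j τ),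
      J (τ + 2) r / J (τ + 1) r < J (τ + 1) r / J τ r)
    (k : ℝ → ℝ)
    (hkleft : ∀ r ∈ Set.Ioo 0 (j τ), k (r * J (τ + 1) r / J τ r) = r)
    (hkright : ∀ s : ℝ, 0 < s →
      k s ∈ Set.Ioo 0 (j τ) ∧ k s * J (τ + 1) (k s) / J τ (k s) = s) :
    (∀ r ∈ Set.Ioo 0 (j τ),
      r * deriv (fun s : ℝ => s * J (τ + 1) s / J τ s) r / (r * J (τ + 1) r / J τ r)
          = 2 + r * (J (τ + 1) r / J τ r - J (τ + 2) r / J (τ + 1) r) ∧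
      2 < r * deriv (fun s : ℝ => s * J (τ + 1) s / J τ s) r
            / (r * J (τ + 1) r / J τ r)) ∧
    (∀ s : ℝ, 0 < s → 2 * s * deriv k s < k s) ∧
    StrictMonoOn (fun D : ℝ => D * (k (μ * R / D) / R) ^ 2) (Set.Ioi 0) :=
  stmt15_general J j τ hτ μ R hμ hR hJpos hrec hquot k hkright
end

section
/- Let \mu, \nu, D, d, R > 0 and let h : [0, \infty) \to [0,\infty) be continuous with h(0)=0, h increasing, and suppose h(\beta R) = \beta^2 R^2/(2(\tau+1)) (1 + o(1)) as \beta R \to 0 with \tau = (N-3)/2, N = 2. For a positive function \tilde\mu(R) with \lim_{R\to 0} \tilde\mu(R)/R = \mu, define \beta(\delta, R) implicitly by d\delta = \nu D h(\beta R)/(\tilde\mu(R) R - D h(\beta R)) for \delta > 0. Then, as R \to 0, D \beta(\delta, R)^2 \to \mu d \delta/(\nu + d\delta), locally uniformly in \delta > 0. -/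
/-!
Writing `θ(δ) = dδ/(ν + dδ) ∈ (0, 1)`, the implicit relation is equivalent to
`D h(βR) = θ(δ) μ̃(R) R`. The right-hand side tends to `0` uniformly in `δ`, so `βR → 0` uniformly
because `h` is strictly increasing with `h(0) = 0`. Then `h(βR) ~ (βR)²` turns the relation into
`Dβ² = θ(δ) · (μ̃(R)/R) / (h(βR)/(βR)²) → θ(δ) μ`, and `θ ≤ 1` makes the convergence uniform.
-/

open Filter Topology Set

lemma StrictMonoOn.tendsto_of_tendsto_comp_Ici {α β γ : Type*} [LinearOrder β]
    [TopologicalSpace β] [OrderTopology β] [LinearOrder γ] [TopologicalSpace γ] [OrderTopology γ]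
    {l : Filter α} {h : β → γ} {x : α → β} {a : β} (hmono : StrictMonoOn h (Ici a))
    (hx : ∀ᶠ t in l, a ≤ x t) (hhx : Tendsto (fun t => h (x t)) l (𝓝 (h a))) :
    Tendsto x l (𝓝 a) := by
  refine tendsto_order.2 ⟨fun b hb => hx.mono fun t ht => hb.trans_le ht, fun b hb => ?_⟩
  filter_upwards [hx, (tendsto_order.1 hhx).2 _ (hmono self_mem_Ici hb.le hb)] with t hxt hht
  exact (hmono.lt_iff_lt hxt hb.le).1 hht

lemma StrictMonoOn.tendsto_nhdsWithin_zero_of_le {α : Type*} {l : Filter α} {h : ℝ → ℝ}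
    {x M : α → ℝ} (hmono : StrictMonoOn h (Ici 0)) (h0 : h 0 = 0) (hx : ∀ᶠ t in l, 0 < x t)
    (hle : ∀ᶠ t in l, h (x t) ≤ M t) (hM : Tendsto M l (𝓝 0)) : Tendsto x l (𝓝[>] 0) := by
  have hhx : ∀ᶠ t in l, 0 ≤ h (x t) := hx.mono fun t ht => by
    simpa [h0] using (hmono self_mem_Ici ht.le ht).le
  refine tendsto_nhdsWithin_iff.2
    ⟨hmono.tendsto_of_tendsto_comp_Ici (hx.mono fun _ => le_of_lt) ?_, hx⟩
  rw [h0]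
  exact squeeze_zero' hhx hle hM

lemma Filter.Tendsto.mul_self_of_div_self {𝕜 : Type*} [NormedField 𝕜] {f : 𝕜 → 𝕜} {s : Set 𝕜}
    {μ : 𝕜} (hf : Tendsto (fun x => f x / x) (𝓝[s] 0) (𝓝 μ)) :
    Tendsto (fun x => f x * x) (𝓝[s] 0) (𝓝 0) := by
  have hsq : Tendsto (fun x : 𝕜 => x * x) (𝓝[s] 0) (𝓝 0) :=
    tendsto_nhdsWithin_of_tendsto_nhds ((by fun_prop : Continuous fun x : 𝕜 => x * x).tendsto' 0 0
      (by simp))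
  refine (by simpa using hf.mul hsq : Tendsto (fun x => f x / x * (x * x)) _ _).congr fun x => ?_
  rcases eq_or_ne x 0 with rfl | hx
  · simp
  · field_simp

lemma tendstoUniformlyOn_mul_of_tendsto {ι α : Type*} {l : Filter ι} {s : Set α} {θ : α → ℝ}
    {g : ι → α → ℝ} {μ C : ℝ} (hθ : ∀ δ ∈ s, |θ δ| ≤ C)
    (hg : Tendsto (fun p : ι × α => g p.1 p.2) (l ×ˢ 𝓟 s) (𝓝 μ)) :
    TendstoUniformlyOn (fun i δ => θ δ * g i δ) (fun δ => θ δ * μ) l s := by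
  rw [tendstoUniformlyOn_iff_tendsto, tendsto_uniformity_iff_dist_tendsto_zero]
  have hlim : Tendsto (fun p : ι × α => C * dist μ (g p.1 p.2)) (l ×ˢ 𝓟 s) (𝓝 0) := by
    simpa using (tendsto_const_nhds (x := μ)).dist hg |>.const_mul C
  refine squeeze_zero' (Eventually.of_forall fun _ => dist_nonneg) ?_ hlim
  filter_upwards [(eventually_principal.2 hθ).prod_inr l] with p hp
  rw [Real.dist_eq, Real.dist_eq, ← mul_sub, abs_mul]
  exact mul_le_mul_of_nonneg_right hp (abs_nonneg _)

lemma eq_div_add_mul_of_eq_mul_div_sub {K : Type*} [Field K] {a ν y M : K} (ha : a ≠ 0)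
    (hνa : ν + a ≠ 0) (h : a = ν * y / (M - y)) : y = a / (ν + a) * M := by
  have hMy : M - y ≠ 0 := fun h0 => ha (by rw [h, h0, div_zero])
  rw [eq_div_iff hMy] at h
  field_simp
  linear_combination -h

lemma mul_sq_eq_of_mul_eq {K : Type*} [Field K] {D H M R b θ : K} (hb : b ≠ 0)
    (hH : H ≠ 0) (hrel : D * H = θ * (M * R)) : D * b ^ 2 = θ * (M / R / (H / (b * R) ^ 2)) := by
  field_simp
  linear_combination hrel

lemma le_abs_div_of_mul_eq {D H θ M : ℝ} (hD : 0 < D) (hθ : |θ| ≤ 1) (hrel : D * H = θ * M) :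
    H ≤ |M| / D := by
  rw [le_div_iff₀ hD, mul_comm, hrel]
  calc θ * M ≤ |θ| * |M| := (le_abs_self _).trans (abs_mul θ M).le
    _ ≤ |M| := mul_le_of_le_one_left (abs_nonneg M) hθ

lemma tendsto_mul_nhdsWithin_zero_of_mul_eq {μ D : ℝ} {h μt θ : ℝ → ℝ} {β : ℝ → ℝ → ℝ}
    (hD : 0 < D) (h0 : h 0 = 0) (hmono : StrictMonoOn h (Ici 0))
    (hμt : Tendsto (fun R => μt R / R) (𝓝[>] 0) (𝓝 μ))
    (hβpos : ∀ δ R : ℝ, 0 < δ → 0 < R → 0 < β δ R) (hθ : ∀ δ : ℝ, 0 < δ → |θ δ| ≤ 1)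
    (hrel : ∀ δ R : ℝ, 0 < δ → 0 < R → D * h (β δ R * R) = θ δ * (μt R * R)) :
    Tendsto (fun p : ℝ × ℝ => β p.2 p.1 * p.1) (𝓝[>] 0 ×ˢ 𝓟 (Ioi 0)) (𝓝[>] 0) := by
  have hpos : ∀ᶠ p : ℝ × ℝ in 𝓝[>] 0 ×ˢ 𝓟 (Ioi 0), 0 < p.1 ∧ 0 < p.2 :=
    prod_mem_prod (self_mem_nhdsWithin (s := Ioi 0)) (mem_principal_self _)
  refine hmono.tendsto_nhdsWithin_zero_of_le h0
    (hpos.mono fun p hp => mul_pos (hβpos _ _ hp.2 hp.1) hp.1)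
    (hpos.mono fun p hp => le_abs_div_of_mul_eq hD (hθ _ hp.2) (hrel _ _ hp.2 hp.1)) ?_
  simpa using (hμt.mul_self_of_div_self.comp tendsto_fst).abs.div_const D

theorem stmt19_general (μ ν D d : ℝ) (hν : 0 < ν) (hD : 0 < D) (hd : 0 < d)
    (h : ℝ → ℝ) (h0 : h 0 = 0)
    (hmono : StrictMonoOn h (Set.Ici 0))
    (hasymp : Filter.Tendsto (fun s : ℝ => h s / s ^ 2)
      (nhdsWithin 0 (Set.Ioi 0)) (nhds 1))
    (μt : ℝ → ℝ)
    (hμtlim : Filter.Tendsto (fun R : ℝ => μt R / R)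
      (nhdsWithin 0 (Set.Ioi 0)) (nhds μ))
    (β : ℝ → ℝ → ℝ)
    (hβpos : ∀ δ R : ℝ, 0 < δ → 0 < R → 0 < β δ R)
    (hβ : ∀ δ R : ℝ, 0 < δ → 0 < R →
      d * δ = ν * D * h (β δ R * R) / (μt R * R - D * h (β δ R * R))) :
    TendstoLocallyUniformlyOn (fun R : ℝ => fun δ : ℝ => D * (β δ R) ^ 2)
      (fun δ : ℝ => μ * d * δ / (ν + d * δ))
      (nhdsWithin 0 (Set.Ioi 0)) (Set.Ioi 0) := by
  refine TendstoUniformlyOn.tendstoLocallyUniformlyOn ?_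
  set θ : ℝ → ℝ := fun δ => d * δ / (ν + d * δ)
  have hθ (δ : ℝ) (hδ : 0 < δ) : |θ δ| ≤ 1 := by
    rw [abs_of_pos (by positivity), div_le_one (by positivity)]
    linarith
  have hrel (δ R : ℝ) (hδ : 0 < δ) (hR : 0 < R) : D * h (β δ R * R) = θ δ * (μt R * R) :=
    eq_div_add_mul_of_eq_mul_div_sub (by positivity) (by positivity)
      (by simpa only [mul_assoc] using hβ δ R hδ hR)
  have hx := tendsto_mul_nhdsWithin_zero_of_mul_eq hD h0 hmono hμtlim hβpos hθ hrel
  have hratio : Tendsto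
      (fun p : ℝ × ℝ => μt p.1 / p.1 / (h (β p.2 p.1 * p.1) / (β p.2 p.1 * p.1) ^ 2))
      (𝓝[>] 0 ×ˢ 𝓟 (Ioi 0)) (𝓝 μ) := by
    have := (hμtlim.comp tendsto_fst).div (hasymp.comp hx) one_ne_zero
    rwa [div_one] at this
  refine ((tendstoUniformlyOn_mul_of_tendsto hθ
    (g := fun R δ => μt R / R / (h (β δ R * R) / (β δ R * R) ^ 2)) hratio).congr ?_).congr_right ?_
  · filter_upwards [self_mem_nhdsWithin] with R hR δ hδ
    have hβR : 0 < β δ R * R := mul_pos (hβpos δ R hδ hR) hR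
    have hhβR : h (β δ R * R) ≠ 0 := by
      simpa [h0] using (hmono self_mem_Ici hβR.le hβR).ne'
    exact (mul_sq_eq_of_mul_eq (hβpos δ R hδ hR).ne' hhβR (hrel δ R hδ hR)).symm
  · intro δ _
    simp only [θ]
    ring

/-- Singular limit `R → 0` of the strip problem (`N = 2`, `τ = -1/2`, so
`2(τ+1) = 1`). With `h(s) = s²(1 + o(1))` as `s → 0⁺`, `h` increasing and continuous with
`h(0) = 0`, `μ̃(R)/R → μ`, and `β(δ,R) > 0` implicitly defined by
`dδ = νD h(βR)/(μ̃(R)R - D h(βR))`, one has `Dβ(δ,R)² → μdδ/(ν + dδ)` as `R → 0⁺`,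
locally uniformly in `δ > 0`. -/
theorem stmt19 (μ ν D d : ℝ) (hμ : 0 < μ) (hν : 0 < ν) (hD : 0 < D) (hd : 0 < d)
    (h : ℝ → ℝ) (hcont : ContinuousOn h (Set.Ici 0)) (h0 : h 0 = 0)
    (hmono : StrictMonoOn h (Set.Ici 0))
    (hasymp : Filter.Tendsto (fun s : ℝ => h s / s ^ 2)
      (nhdsWithin 0 (Set.Ioi 0)) (nhds 1))
    (μt : ℝ → ℝ) (hμt : ∀ R : ℝ, 0 < R → 0 < μt R)
    (hμtlim : Filter.Tendsto (fun R : ℝ => μt R / R)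
      (nhdsWithin 0 (Set.Ioi 0)) (nhds μ))
    (β : ℝ → ℝ → ℝ)
    (hβpos : ∀ δ R : ℝ, 0 < δ → 0 < R → 0 < β δ R)
    (hβ : ∀ δ R : ℝ, 0 < δ → 0 < R →
      d * δ = ν * D * h (β δ R * R) / (μt R * R - D * h (β δ R * R))) :
    TendstoLocallyUniformlyOn (fun R : ℝ => fun δ : ℝ => D * (β δ R) ^ 2)
      (fun δ : ℝ => μ * d * δ / (ν + d * δ))
      (nhdsWithin 0 (Set.Ioi 0)) (Set.Ioi 0) :=
  stmt19_general μ ν D d hν hD hd h h0 hmono hasymp μt hμtlim β hβpos hβ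
end
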